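/- Let ε ∈ {1,−1} and let (a_1,…,a_n) be an n-tuple of strictly positive integers with M_n(a_1,…,a_n) = ε·S and (a_1,…,a_n) ≠ (1,1,2,1,1). Then (a_1,…,a_n) is obtained from a shorter tuple of strictly positive integers that is itself a solution of M = ±S by a single application of operation (a) or operation (b): either there exist an index i with 1 ≤ i ≤ n−2 and strictly positive integers (b_1,…,b_{n−1}) with M_{n−1}(b_1,…,b_{n−1}) = ε·S such that (a_1,…,a_n) = (b_1,…,b_{i−1}, b_i+1, 1, b_{i+1}+1, b_{i+2},…,b_{n−1}); or there exist an index i and strictly positive integers (b_1,…,b_{n−3}) with M_{n−3}(b_1,…,b_{n−3}) = −ε·S and strictly positive integers a′, a″ with a′ + a″ = b_i + 1 such that (a_1,…,a_n) = (b_1,…,b_{i−1}, a′, 1, 1, a″, b_{i+1},…,b_{n−3}). -/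

import Mathlib

/-!
A positive tuple either contains a block `x, 1, y` with `x, y ≥ 2` (an image of operation (a)),
or a block `a', 1, 1, a''` (an image of operation (b)), or it has the form `1^p m 1^q` with
`p, q ≤ 2` and all entries of `m` at least `2`. Undoing (a) does not change `M`, since
`M(b+1, 1, c+1) = M(b, c)`, and undoing (b) changes its sign, since `M(a', 1, 1, a'') = -M(a'+a''-1)`.
In the remaining case the first column `(A, C)` of `M(m)` satisfies `length m ≤ C < A`, and
`M(1^p m 1^q) = ±S` prescribes this column to be one of eighteen small vectors; the only one
compatible with these inequalities is `(2, 1)`, which forces `m = (2)` and the tuple `(1,1,2,1,1)`.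
-/

/-- The elementary matrix `[[a, -1], [1, 0]]`. -/
def genMat (a : ℤ) : Matrix (Fin 2) (Fin 2) ℤ := !![a, -1; 1, 0]

/-- `Mprod [a₁, …, aₙ] = [[aₙ,-1],[1,0]] ⋯ [[a₁,-1],[1,0]]`. -/
def Mprod (l : List ℤ) : Matrix (Fin 2) (Fin 2) ℤ := ((l.map genMat).reverse).prod

@[simp] lemma Mprod_nil : Mprod [] = 1 := rfl

@[simp] lemma Mprod_cons (x : ℤ) (t : List ℤ) : Mprod (x :: t) = Mprod t * genMat x := by
  simp [Mprod]

lemma Mprod_append (s t : List ℤ) : Mprod (s ++ t) = Mprod t * Mprod s := by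
  simp [Mprod, List.prod_append]

lemma Mprod_append_singleton (t : List ℤ) (x : ℤ) : Mprod (t ++ [x]) = genMat x * Mprod t := by
  simp [Mprod_append]

lemma genMat_succ_mul_genMat_one_mul_genMat_succ (b c : ℤ) :
    genMat (c + 1) * genMat 1 * genMat (b + 1) = genMat c * genMat b := by
  simp only [genMat, Matrix.mul_fin_two]
  ext i j; fin_cases i <;> fin_cases j <;> simp; ring

lemma genMat_mul_genMat_one_mul_genMat_one_mul_genMat (a' a'' : ℤ) :
    genMat a'' * genMat 1 * genMat 1 * genMat a' = -genMat (a' + a'' - 1) := by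
  simp only [genMat, Matrix.mul_fin_two]
  ext i j; fin_cases i <;> fin_cases j <;> simp; ring

lemma Mprod_opA (u v : List ℤ) (b c : ℤ) :
    Mprod (u ++ (b + 1) :: 1 :: (c + 1) :: v) = Mprod (u ++ b :: c :: v) := by
  simp only [Mprod_append, Mprod_cons, mul_assoc, ← genMat_succ_mul_genMat_one_mul_genMat_succ b c]

lemma Mprod_opB (u v : List ℤ) (a' a'' : ℤ) :
    Mprod (u ++ a' :: 1 :: 1 :: a'' :: v) = -Mprod (u ++ (a' + a'' - 1) :: v) := by
  have h : genMat (a' + a'' - 1) = -(genMat a'' * genMat 1 * genMat 1 * genMat a') := by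
    rw [genMat_mul_genMat_one_mul_genMat_one_mul_genMat, neg_neg]
  simp only [Mprod_append, Mprod_cons, h, mul_assoc, neg_mul, mul_neg, neg_neg]

/-- The first column `(A, C)` of `Mprod m` evolves by `(A, C) ↦ (x A - C, A)`, and `x ≥ 2` keeps
it strictly decreasing from top to bottom, as in the Euclidean algorithm. -/
lemma length_le_Mprod_one_zero_and_lt (m : List ℤ) (hm : ∀ x ∈ m, 2 ≤ x) :
    (m.length : ℤ) ≤ Mprod m 1 0 ∧ Mprod m 1 0 < Mprod m 0 0 := by
  induction m using List.reverseRecOn with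
  | nil => simp
  | append_singleton t x ih =>
    have hx : 2 ≤ x := hm x (by simp)
    obtain ⟨hlen, hlt⟩ := ih fun y hy => hm y (by simp [hy])
    have h00 : (genMat x * Mprod t) 0 0 = x * Mprod t 0 0 - Mprod t 1 0 := by
      simp [genMat, Matrix.mul_apply]
      ring
    have h10 : (genMat x * Mprod t) 1 0 = Mprod t 0 0 := by simp [genMat, Matrix.mul_apply]
    rw [Mprod_append_singleton, h00, h10, List.length_append, List.length_singleton]
    push_cast
    exact ⟨by omega, by nlinarith⟩

def HasOpAPattern (l : List ℤ) : Prop :=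
  ∃ u v b c, 0 < b ∧ 0 < c ∧ l = u ++ (b + 1) :: 1 :: (c + 1) :: v

def HasOpBPattern (l : List ℤ) : Prop :=
  ∃ u v a' a'', l = u ++ a' :: 1 :: 1 :: a'' :: v

def IsOnesPadded (l : List ℤ) : Prop :=
  ∃ p q m, p ≤ 2 ∧ q ≤ 2 ∧ (∀ x ∈ m, 2 ≤ x) ∧
    l = List.replicate p 1 ++ m ++ List.replicate q 1

lemma HasOpAPattern.cons {l : List ℤ} (a : ℤ) (h : HasOpAPattern l) : HasOpAPattern (a :: l) := by
  obtain ⟨u, v, b, c, hb, hc, rfl⟩ := h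
  exact ⟨a :: u, v, b, c, hb, hc, rfl⟩

lemma HasOpBPattern.cons {l : List ℤ} (a : ℤ) (h : HasOpBPattern l) : HasOpBPattern (a :: l) := by
  obtain ⟨u, v, a', a'', rfl⟩ := h
  exact ⟨a :: u, v, a', a'', rfl⟩

lemma IsOnesPadded.cons {a : ℤ} (ha : 0 < a) {w : List ℤ} (hw : IsOnesPadded w) :
    HasOpAPattern (a :: w) ∨ HasOpBPattern (a :: w) ∨ IsOnesPadded (a :: w) := by
  obtain ⟨p, q, m, hp, hq, hm, rfl⟩ := hw
  obtain rfl | ha2 : a = 1 ∨ 2 ≤ a := by omega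
  · interval_cases p
    · exact .inr <| .inr ⟨1, q, m, by omega, hq, hm, rfl⟩
    · exact .inr <| .inr ⟨2, q, m, by omega, hq, hm, rfl⟩
    · rcases hw : m ++ List.replicate q 1 with _ | ⟨y, w⟩
      · exact .inr <| .inr ⟨2, 1, [], by omega, by omega, by simp, by simp_all⟩
      · exact .inr <| .inl ⟨[], w, 1, y, by simp [hw]⟩
  · interval_cases p
    · refine .inr <| .inr ⟨0, q, a :: m, by omega, hq, ?_, rfl⟩
      simpa [ha2] using hm
    · rcases m with _ | ⟨y, m⟩
      · interval_cases q
        · exact .inr <| .inr ⟨0, 1, [a], by omega, by omega, by simpa, rfl⟩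
        · exact .inr <| .inr ⟨0, 2, [a], by omega, by omega, by simpa, rfl⟩
        · exact .inr <| .inl ⟨[], [], a, 1, rfl⟩
      · have hy : 2 ≤ y := hm y (by simp)
        exact .inl ⟨[], m ++ List.replicate q 1, a - 1, y - 1, by omega, by omega, by simp⟩
    · rcases hw : m ++ List.replicate q 1 with _ | ⟨y, w⟩
      · exact .inr <| .inr ⟨0, 2, [a], by omega, by omega, by simpa, by simp_all⟩
      · exact .inr <| .inl ⟨[], w, a, y, by simp [hw]⟩

lemma hasOpAPattern_or_hasOpBPattern_or_isOnesPadded (l : List ℤ) (hpos : ∀ x ∈ l, 0 < x) :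
    HasOpAPattern l ∨ HasOpBPattern l ∨ IsOnesPadded l := by
  induction l with
  | nil => exact .inr <| .inr ⟨0, 0, [], by omega, by omega, by simp, rfl⟩
  | cons a t ih =>
    rcases ih fun x hx => hpos x (by simp [hx]) with hA | hB | hP
    · exact .inl (hA.cons a)
    · exact .inr <| .inl (hB.cons a)
    · exact hP.cons (hpos a (by simp))

lemma IsOnesPadded.eq_of_Mprod_eq {l : List ℤ} (hl : IsOnesPadded l) {ε : ℤ} (hε : ε = 1 ∨ ε = -1)
    (h : Mprod l = ε • !![0, -1; 1, 0]) : l = [1, 1, 2, 1, 1] := by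
  obtain ⟨p, q, m, hp, hq, hm, rfl⟩ := hl
  obtain ⟨hlen, hlt⟩ := length_le_Mprod_one_zero_and_lt m hm
  have hone : (Mprod m 0 0 = 1 ∧ Mprod m 0 1 = 0 ∧ Mprod m 1 0 = 0 ∧ Mprod m 1 1 = 1) ∨
      1 ≤ Mprod m 1 0 := by
    rcases m with _ | ⟨x, t⟩
    · simp
    · simp only [List.length_cons] at hlen
      omega
  have key : p = 2 ∧ q = 2 ∧ Mprod m 0 0 = 2 ∧ Mprod m 1 0 = 1 := by
    rw [Mprod_append, Mprod_append, Matrix.eta_fin_two (Mprod m)] at h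
    rcases hε with rfl | rfl <;> interval_cases p <;> interval_cases q <;> simp [genMat] at h <;> omega
  obtain ⟨rfl, rfl, h00, h10⟩ := key
  have hlen1 : m.length ≤ 1 := by omega
  rcases m with _ | ⟨x, _ | ⟨y, t⟩⟩
  · simp at h00
  · simp [genMat] at h00
    simp [h00]
  · simp at hlen1

/-- Every positive solution of `Mₙ = ε·S` other than `(1,1,2,1,1)` is the image,
under one application of operation (a) or of operation (b), of a shorter positive
solution of `M = ±S`. -/
theorem stmt13 (l : List ℤ) (ε : ℤ) (hε : ε = 1 ∨ ε = -1)
    (hpos : ∀ x ∈ l, 0 < x)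
    (hsol : Mprod l = ε • !![0, -1; 1, 0])
    (hne : l ≠ [1, 1, 2, 1, 1]) :
    (∃ (u v : List ℤ) (b c : ℤ), 0 < b ∧ 0 < c ∧
      (∀ x ∈ u, 0 < x) ∧ (∀ x ∈ v, 0 < x) ∧
      Mprod (u ++ b :: c :: v) = ε • !![0, -1; 1, 0] ∧
      l = u ++ (b + 1) :: 1 :: (c + 1) :: v) ∨
    (∃ (u v : List ℤ) (b a' a'' : ℤ), 0 < b ∧ 0 < a' ∧ 0 < a'' ∧
      (∀ x ∈ u, 0 < x) ∧ (∀ x ∈ v, 0 < x) ∧ a' + a'' = b + 1 ∧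
      Mprod (u ++ b :: v) = (-ε) • !![0, -1; 1, 0] ∧
      l = u ++ a' :: 1 :: 1 :: a'' :: v) := by
  rcases hasOpAPattern_or_hasOpBPattern_or_isOnesPadded l hpos with
    ⟨u, v, b, c, hb, hc, rfl⟩ | ⟨u, v, a', a'', rfl⟩ | hpad
  · refine .inl ⟨u, v, b, c, hb, hc, fun x hx => hpos x (by simp [hx]),
      fun x hx => hpos x (by simp [hx]), by rwa [← Mprod_opA], rfl⟩
  · have ha' : 0 < a' := hpos a' (by simp)
    have ha'' : 0 < a'' := hpos a'' (by simp)
    refine .inr ⟨u, v, a' + a'' - 1, a', a'', by omega, ha', ha'', fun x hx => hpos x (by simp [hx]),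
      fun x hx => hpos x (by simp [hx]), by ring, ?_, rfl⟩
    rw [neg_smul, ← hsol, Mprod_opB, neg_neg]
  · exact absurd (hpad.eq_of_Mprod_eq hε hsol) hne
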